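/- Let C > 0 and 1 ≤ p < 3. There exists a constant C' > 0 depending only on C and p such that for every convex element K(a,b,ã,b̃) satisfying conditions (Δ1) and (D2) with constant C: max{ a/b^{p−1}, b/a^{p−1} } · I_p(a,b,ã,b̃) ≤ C' · h / |l|^{p−1}. -/

import Mathlib

noncomputable section

/-- The Euclidean plane. -/
abbrev E2 := EuclideanSpace ℝ (Fin 2)

/-- The point (x, y) of the Euclidean plane. -/
def pt2 (x y : ℝ) : E2 := WithLp.toLp 2 ![x, y]

/-- The quadrilateral `K(a,b,ta,tb)` with vertices `(0,0), (a,0), (ta,tb), (0,b)`. -/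
def quadK (a b ta tb : ℝ) : Set E2 :=
  convexHull ℝ {pt2 0 0, pt2 a 0, pt2 ta tb, pt2 0 b}

/-- Length of the side `l` joining `V3 = (ta, tb)` and `V4 = (0, b)` of `K(a,b,ta,tb)`. -/
def lenl (b ta tb : ℝ) : ℝ := Real.sqrt (ta ^ 2 + (b - tb) ^ 2)

/-- The sine of the interior angle α at `V4 = (0,b)` of the triangle with vertices
`V2 = (a,0)`, `V3 = (ta,tb)`, `V4 = (0,b)`. -/
def sinAlpha (a b ta tb : ℝ) : ℝ :=
  Real.sin (EuclideanGeometry.angle (pt2 a 0) (pt2 0 b) (pt2 ta tb))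

/-- The quantity `I_p(a,b,ta,tb)`. -/
def Ip (p a b ta tb : ℝ) : ℝ :=
  ∫ z in (Set.Icc (0:ℝ) 1) ×ˢ (Set.Icc (0:ℝ) 1),
    (1 + z.1 * (tb / b - 1) + z.2 * (ta / a - 1)) ^ (-(p - 1))

/-!
Put `s = b̃/b - 1`, `t = ã/a - 1` and `δ = ã/a + b̃/b - 1`, so that the integrand of `I_p` is
`(1 + x s + y t)^(-(p-1))` on the unit square. After swapping the coordinates if necessary
(`t ≤ s`), the affine base dominates both `min δ 1 * x` and `min δ 1 * (1 - y)`, so the integrand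
is at most `(min δ 1)^(1-p) (x (1 - y))^(-(p-1)/2)`, which is integrable precisely because
`p < 3`; hence `I_p ≲ (min δ 1)^(1-p)`. On the geometric side `sin α · |V₂V₄| · |l|` is the cross
product `a b δ` and `max a b ≤ |V₂V₄|`, so (D2) gives `|l| ≤ C min(a,b) δ`, and (Δ1) bounds `δ`
by `2C · min δ 1`. As `max a b ≤ h` and `max (a/b^(p-1)) (b/a^(p-1)) ≤ max a b / min(a,b)^(p-1)`,
the claim follows with `C' = (1 - (p-1)/2)⁻² (2C²)^(p-1)`.
-/

open MeasureTheory Set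

lemma integrableOn_rpow_neg_Icc {e : ℝ} (he : e < 1) :
    IntegrableOn (fun x : ℝ => x ^ (-e)) (Icc 0 1) := by
  rw [integrableOn_Icc_iff_integrableOn_Ioc]
  exact (intervalIntegral.intervalIntegrable_rpow' (by linarith)).1

lemma integrableOn_one_sub_rpow_neg_Icc {e : ℝ} (he : e < 1) :
    IntegrableOn (fun y : ℝ => (1 - y) ^ (-e)) (Icc 0 1) := by
  rw [integrableOn_Icc_iff_integrableOn_Ioc]
  have := ((intervalIntegral.intervalIntegrable_rpow' (r := -e) (by linarith)
    (a := 0) (b := 1)).comp_sub_left 1).symm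
  simpa [intervalIntegrable_iff, uIoc_of_le zero_le_one] using this

lemma integral_rpow_neg_Icc {e : ℝ} (he : e < 1) :
    ∫ x in Icc (0 : ℝ) 1, x ^ (-e) = (1 - e)⁻¹ := by
  rw [integral_Icc_eq_integral_Ioc, ← intervalIntegral.integral_of_le zero_le_one,
    integral_rpow (Or.inl (by linarith)), Real.one_rpow, Real.zero_rpow (by linarith)]
  ring

lemma integral_one_sub_rpow_neg_Icc {e : ℝ} (he : e < 1) :
    ∫ y in Icc (0 : ℝ) 1, (1 - y) ^ (-e) = (1 - e)⁻¹ := by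
  rw [integral_Icc_eq_integral_Ioc, ← intervalIntegral.integral_of_le zero_le_one,
    intervalIntegral.integral_comp_sub_left (fun x : ℝ => x ^ (-e)), sub_self, sub_zero,
    intervalIntegral.integral_of_le zero_le_one, ← integral_Icc_eq_integral_Ioc,
    integral_rpow_neg_Icc he]

lemma integrableOn_unitSquare_rpow_neg_mul {e : ℝ} (he : e < 1) :
    IntegrableOn (fun z : ℝ × ℝ => z.1 ^ (-e) * (1 - z.2) ^ (-e)) (Icc 0 1 ×ˢ Icc 0 1) := by
  rw [IntegrableOn, Measure.volume_eq_prod, ← Measure.prod_restrict]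
  exact (integrableOn_rpow_neg_Icc he).mul_prod (integrableOn_one_sub_rpow_neg_Icc he)

lemma integral_unitSquare_rpow_neg_mul {e : ℝ} (he : e < 1) :
    ∫ z in Icc (0 : ℝ) 1 ×ˢ Icc (0 : ℝ) 1, z.1 ^ (-e) * (1 - z.2) ^ (-e) = (1 - e)⁻¹ ^ 2 := by
  rw [Measure.volume_eq_prod,
    setIntegral_prod_mul (fun x : ℝ => x ^ (-e)) (fun y : ℝ => (1 - y) ^ (-e)),
    integral_rpow_neg_Icc he,
    integral_one_sub_rpow_neg_Icc he, sq]

lemma rpow_neg_le_of_le_of_le {f u v q : ℝ} (hu : 0 < u) (hv : 0 < v) (hfu : u ≤ f)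
    (hfv : v ≤ f) (hq : 0 ≤ q) : f ^ (-q) ≤ u ^ (-(q / 2)) * v ^ (-(q / 2)) := by
  have hf : 0 < f := hu.trans_le hfu
  calc f ^ (-q) = f ^ (-(q / 2)) * f ^ (-(q / 2)) := by rw [← Real.rpow_add hf]; ring_nf
    _ ≤ u ^ (-(q / 2)) * v ^ (-(q / 2)) :=
      mul_le_mul (Real.rpow_le_rpow_of_nonpos hu hfu (by linarith))
        (Real.rpow_le_rpow_of_nonpos hv hfv (by linarith)) (by positivity) (by positivity)

lemma min_mul_le_one_add_mul_add_mul {s t x y : ℝ} (ht : -1 ≤ t) (hst : 0 ≤ 1 + s + t)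
    (hts : t ≤ s) (hx : x ∈ Icc (0 : ℝ) 1) (hy : y ∈ Icc (0 : ℝ) 1) :
    min (1 + s + t) 1 * x ≤ 1 + x * s + y * t ∧
      min (1 + s + t) 1 * (1 - y) ≤ 1 + x * s + y * t := by
  obtain ⟨hx0, hx1⟩ := hx
  obtain ⟨hy0, hy1⟩ := hy
  have hd : min (1 + s + t) 1 ≤ 1 + s + t := min_le_left _ _
  have hd1 : min (1 + s + t) 1 ≤ 1 := min_le_right _ _
  have hd0 : 0 ≤ min (1 + s + t) 1 := le_min hst zero_le_one
  -- For `0 < t ≤ s` the base is at least `1`; for `t ≤ 0` use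
  -- `1 + x s + y t - (1 + s + t) x = (1 - x) + t (y - x) ≥ 0`.
  rcases le_total t 0 with ht0 | ht0
  · constructor
    · nlinarith [mul_nonneg hx0 (by linarith : 0 ≤ 1 + t)]
    · rcases le_total s 0 with hs0 | hs0
      · nlinarith [mul_nonneg hy0 hd0, mul_nonneg (sub_nonneg.2 hy1) (neg_nonneg.2 ht0),
          mul_nonneg (sub_nonneg.2 hx1) (neg_nonneg.2 hs0)]
      · nlinarith [mul_nonneg hx0 hs0, mul_nonneg (sub_nonneg.2 hy1) (sub_nonneg.2 hd1),
          mul_nonneg hy0 (by linarith : 0 ≤ 1 + t)]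
  · constructor <;> nlinarith

lemma setIntegral_unitSquare_rpow_neg_le_of_le {q s t : ℝ} (hq0 : 0 ≤ q) (hq2 : q < 2)
    (ht : -1 ≤ t) (hst : 0 < 1 + s + t) (hts : t ≤ s) :
    ∫ z in Icc (0 : ℝ) 1 ×ˢ Icc (0 : ℝ) 1, (1 + z.1 * s + z.2 * t) ^ (-q) ≤
      (1 - q / 2)⁻¹ ^ 2 * min (1 + s + t) 1 ^ (-q) := by
  set d := min (1 + s + t) 1
  have hd : 0 < d := lt_min hst one_pos
  have hS : MeasurableSet (Icc (0 : ℝ) 1 ×ˢ Icc (0 : ℝ) 1) :=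
    measurableSet_Icc.prod measurableSet_Icc
  have hbound := fun z (hz : z ∈ Icc (0 : ℝ) 1 ×ˢ Icc (0 : ℝ) 1) =>
    min_mul_le_one_add_mul_add_mul ht hst.le hts hz.1 hz.2
  have hfst : ∀ᵐ z : ℝ × ℝ, z.1 ≠ 0 :=
    Measure.quasiMeasurePreserving_fst.ae (Measure.ae_ne volume 0)
  have hsnd : ∀ᵐ z : ℝ × ℝ, z.2 ≠ 1 :=
    Measure.quasiMeasurePreserving_snd.ae (Measure.ae_ne volume 1)
  have hnonneg : 0 ≤ᵐ[volume.restrict (Icc 0 1 ×ˢ Icc 0 1)]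
      fun z : ℝ × ℝ => (1 + z.1 * s + z.2 * t) ^ (-q) := by
    filter_upwards [self_mem_ae_restrict hS] with z hz
    exact Real.rpow_nonneg ((mul_nonneg hd.le hz.1.1).trans (hbound z hz).1) _
  have hmajor : (fun z : ℝ × ℝ => (1 + z.1 * s + z.2 * t) ^ (-q))
      ≤ᵐ[volume.restrict (Icc 0 1 ×ˢ Icc 0 1)]
      fun z => d ^ (-q) * (z.1 ^ (-(q / 2)) * (1 - z.2) ^ (-(q / 2))) := by
    filter_upwards [self_mem_ae_restrict hS, ae_restrict_of_ae hfst, ae_restrict_of_ae hsnd]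
      with z hz hz1 hz2
    have hx : 0 < z.1 := hz.1.1.lt_of_ne' hz1
    have hy : 0 < 1 - z.2 := sub_pos.2 (hz.2.2.lt_of_ne hz2)
    have := rpow_neg_le_of_le_of_le (mul_pos hd hx) (mul_pos hd hy) (hbound z hz).1
      (hbound z hz).2 hq0
    rwa [Real.mul_rpow hd.le hx.le, Real.mul_rpow hd.le hy.le, mul_mul_mul_comm,
      ← Real.rpow_add hd, ← neg_add, add_halves] at this
  calc ∫ z in Icc (0 : ℝ) 1 ×ˢ Icc (0 : ℝ) 1, (1 + z.1 * s + z.2 * t) ^ (-q)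
      ≤ ∫ z in Icc (0 : ℝ) 1 ×ˢ Icc (0 : ℝ) 1,
          d ^ (-q) * (z.1 ^ (-(q / 2)) * (1 - z.2) ^ (-(q / 2))) :=
        integral_mono_of_nonneg hnonneg
          ((integrableOn_unitSquare_rpow_neg_mul (by linarith)).const_mul _) hmajor
    _ = (1 - q / 2)⁻¹ ^ 2 * d ^ (-q) := by
      rw [integral_const_mul, integral_unitSquare_rpow_neg_mul (by linarith), mul_comm]

lemma setIntegral_unitSquare_rpow_neg_le {q s t : ℝ} (hq0 : 0 ≤ q) (hq2 : q < 2)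
    (hs : -1 ≤ s) (ht : -1 ≤ t) (hst : 0 < 1 + s + t) :
    ∫ z in Icc (0 : ℝ) 1 ×ˢ Icc (0 : ℝ) 1, (1 + z.1 * s + z.2 * t) ^ (-q) ≤
      (1 - q / 2)⁻¹ ^ 2 * min (1 + s + t) 1 ^ (-q) := by
  rcases le_total t s with hts | hst_le
  · exact setIntegral_unitSquare_rpow_neg_le_of_le hq0 hq2 ht hst hts
  · have hswap := setIntegral_unitSquare_rpow_neg_le_of_le hq0 hq2 hs (by linarith) hst_le
    rw [Measure.volume_eq_prod, ← setIntegral_prod_swap] at hswap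
    simpa only [Prod.fst_swap, Prod.snd_swap, add_right_comm _ (_ * t), add_right_comm _ t,
      ← Measure.volume_eq_prod] using hswap

@[simp] lemma pt2_apply_zero (x y : ℝ) : pt2 x y 0 = x := rfl

@[simp] lemma pt2_apply_one (x y : ℝ) : pt2 x y 1 = y := rfl

lemma pt2_sub_pt2 (x y x' y' : ℝ) : pt2 x y - pt2 x' y' = pt2 (x - x') (y - y') := by
  ext i; fin_cases i <;> rfl

lemma norm_pt2 (x y : ℝ) : ‖pt2 x y‖ = √(x ^ 2 + y ^ 2) := by
  simp [EuclideanSpace.norm_eq, Fin.sum_univ_two]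

lemma sin_angle_mul_norm_mul_norm_eq_abs (u v : E2) :
    Real.sin (InnerProductGeometry.angle u v) * (‖u‖ * ‖v‖) = |u 0 * v 1 - u 1 * v 0| := by
  rw [InnerProductGeometry.sin_angle_mul_norm_mul_norm, ← Real.sqrt_sq_eq_abs]
  congr 1
  simp only [PiLp.inner_apply, Fin.sum_univ_two, RCLike.inner_apply, conj_trivial]
  ring

lemma sinAlpha_mul_eq_abs (a b ta tb : ℝ) :
    sinAlpha a b ta tb * (√(a ^ 2 + b ^ 2) * lenl b ta tb) = |a * (tb - b) + b * ta| := by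
  have key := sin_angle_mul_norm_mul_norm_eq_abs (pt2 a 0 - pt2 0 b) (pt2 ta tb - pt2 0 b)
  rw [sinAlpha, EuclideanGeometry.angle, vsub_eq_sub, vsub_eq_sub, lenl]
  simp only [pt2_sub_pt2, norm_pt2, pt2_apply_zero, pt2_apply_one, sub_zero, zero_sub,
    neg_sq] at key ⊢
  convert key using 3 <;> ring_nf

lemma max_le_diam_quadK (a b ta tb : ℝ) (ha : 0 ≤ a) (hb : 0 ≤ b) :
    max a b ≤ Metric.diam (quadK a b ta tb) := by
  have hbdd : Bornology.IsBounded (quadK a b ta tb) :=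
    ((Set.toFinite _).isCompact_convexHull ℝ).isBounded
  have hmem : ∀ v ∈ ({pt2 0 0, pt2 a 0, pt2 ta tb, pt2 0 b} : Set E2), v ∈ quadK a b ta tb :=
    fun v hv => subset_convexHull ℝ _ hv
  refine max_le ?_ ?_
  · have := Metric.dist_le_diam_of_mem hbdd (hmem (pt2 0 0) (by simp)) (hmem (pt2 a 0) (by simp))
    rwa [dist_eq_norm, pt2_sub_pt2, norm_pt2, sub_self, zero_sub, neg_sq, zero_pow two_ne_zero,
      add_zero, Real.sqrt_sq ha] at this
  · have := Metric.dist_le_diam_of_mem hbdd (hmem (pt2 0 0) (by simp)) (hmem (pt2 0 b) (by simp))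
    rwa [dist_eq_norm, pt2_sub_pt2, norm_pt2, sub_self, zero_sub, neg_sq, zero_pow two_ne_zero,
      zero_add, Real.sqrt_sq hb] at this

lemma max_le_sqrt_sq_add_sq (a b : ℝ) : max a b ≤ √(a ^ 2 + b ^ 2) :=
  max_le (Real.le_sqrt_of_sq_le (by nlinarith)) (Real.le_sqrt_of_sq_le (by nlinarith))

lemma lenl_le_of_inv_le_sinAlpha {a b ta tb C : ℝ} (ha : 0 < a) (hb : 0 < b)
    (hδ : 0 ≤ ta / a + tb / b - 1) (hsin : 1 / C ≤ sinAlpha a b ta tb) (hC : 0 < C) :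
    lenl b ta tb ≤ C * (min a b * (ta / a + tb / b - 1)) := by
  set δ := ta / a + tb / b - 1 with hδdef
  set L := lenl b ta tb
  have hL : 0 ≤ L := Real.sqrt_nonneg _
  have hM : 0 < max a b := lt_max_of_lt_left ha
  have hcross : a * (tb - b) + b * ta = max a b * min a b * δ := by
    rw [max_mul_min, hδdef]; field_simp; ring
  have hsinL : sinAlpha a b ta tb * (√(a ^ 2 + b ^ 2) * L) = max a b * (min a b * δ) := by
    rw [sinAlpha_mul_eq_abs, hcross, abs_of_nonneg (by positivity), mul_assoc]
  have hR := max_le_sqrt_sq_add_sq a b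
  have : max a b * L ≤ max a b * (C * (min a b * δ)) :=
    calc max a b * L ≤ √(a ^ 2 + b ^ 2) * L := by gcongr
      _ = C * (1 / C * (√(a ^ 2 + b ^ 2) * L)) := by field_simp
      _ ≤ C * (sinAlpha a b ta tb * (√(a ^ 2 + b ^ 2) * L)) := by gcongr
      _ = max a b * (C * (min a b * δ)) := by rw [hsinL]; ring
  exact le_of_mul_le_mul_left this hM

lemma lenl_le_of_delta1_D2 {a b ta tb C : ℝ} (ha : 0 < a) (hb : 0 < b)
    (hconv : 1 < ta / a + tb / b) (hΔa : ta / a ≤ C) (hΔb : tb / b ≤ C)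
    (hsin : 1 / C ≤ sinAlpha a b ta tb) (hC : 0 < C) :
    lenl b ta tb ≤ 2 * C ^ 2 * (min a b * min (ta / a + tb / b - 1) 1) := by
  set δ := ta / a + tb / b - 1
  have hC1 : 1 ≤ C := by
    have := hsin.trans (Real.sin_le_one _)
    rwa [div_le_one hC] at this
  have hδ : δ ≤ 2 * C * min δ 1 := by
    rcases le_total δ 1 with h | h
    · rw [min_eq_left h]; nlinarith
    · rw [min_eq_right h]; linarith
  calc lenl b ta tb ≤ C * (min a b * δ) :=
        lenl_le_of_inv_le_sinAlpha ha hb (by linarith) hsin hC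
    _ ≤ C * (min a b * (2 * C * min δ 1)) := by gcongr
    _ = 2 * C ^ 2 * (min a b * min δ 1) := by ring

lemma max_div_rpow_le {a b q : ℝ} (ha : 0 < a) (hb : 0 < b) (hq : 0 ≤ q) :
    max (a / b ^ q) (b / a ^ q) ≤ max a b / min a b ^ q := by
  have hm : 0 < min a b := lt_min ha hb
  apply max_le <;> gcongr
  exacts [le_max_left a b, min_le_right a b, le_max_right a b, min_le_left a b]

/-- For `1 ≤ p < 3` and convex elements `K(a,b,ta,tb)` under conditions (Δ1) and (D2)
with constant `C`: `max{a/b^{p-1}, b/a^{p-1}} · I_p ≤ C' · h / |l|^{p-1}`. -/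
theorem Ip_bound_of_delta1_D2 (C p : ℝ) (hC : 0 < C) (hp1 : 1 ≤ p) (hp3 : p < 3) :
    ∃ C' : ℝ, 0 < C' ∧
      ∀ a b ta tb : ℝ, 0 < a → 0 < b → 0 < ta → 0 < tb →
        1 < ta / a + tb / b →
        ta / a ≤ C → tb / b ≤ C →
        1 / C ≤ sinAlpha a b ta tb →
        max (a / b ^ (p - 1)) (b / a ^ (p - 1)) * Ip p a b ta tb ≤
          C' * (Metric.diam (quadK a b ta tb) / lenl b ta tb ^ (p - 1)) := by
  set q := p - 1
  have hq : 0 ≤ q := by linarith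
  have hκ : 0 < (1 - q / 2)⁻¹ ^ 2 := pow_pos (inv_pos.2 (by linarith)) 2
  refine ⟨(1 - q / 2)⁻¹ ^ 2 * (2 * C ^ 2) ^ q, by positivity, ?_⟩
  intro a b ta tb ha hb hta htb hconv hΔa hΔb hsin
  set d := min (ta / a + tb / b - 1) 1
  have hd : 0 < d := lt_min (by linarith) one_pos
  have hm : 0 < min a b := lt_min ha hb
  have hIp : Ip p a b ta tb ≤ (1 - q / 2)⁻¹ ^ 2 * d ^ (-q) := by
    have := setIntegral_unitSquare_rpow_neg_le hq (by linarith)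
      (s := tb / b - 1) (t := ta / a - 1) (by have := div_pos htb hb; linarith)
      (by have := div_pos hta ha; linarith) (by linarith)
    rwa [show 1 + (tb / b - 1) + (ta / a - 1) = ta / a + tb / b - 1 by ring] at this
  have hL : lenl b ta tb ^ q ≤ (2 * C ^ 2) ^ q * (min a b * d) ^ q := by
    rw [← Real.mul_rpow (by positivity) (by positivity)]
    exact Real.rpow_le_rpow (Real.sqrt_nonneg _)
      (lenl_le_of_delta1_D2 ha hb hconv hΔa hΔb hsin hC) hq
  have hLpos : 0 < lenl b ta tb ^ q :=
    Real.rpow_pos_of_pos (Real.sqrt_pos.2 (by positivity)) q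
  have hdiam := max_le_diam_quadK a b ta tb ha.le hb.le
  calc max (a / b ^ q) (b / a ^ q) * Ip p a b ta tb
      ≤ max (a / b ^ q) (b / a ^ q) * ((1 - q / 2)⁻¹ ^ 2 * d ^ (-q)) := by
        gcongr
    _ ≤ max a b / min a b ^ q * ((1 - q / 2)⁻¹ ^ 2 * d ^ (-q)) := by
        gcongr
        exact max_div_rpow_le ha hb hq
    _ = (1 - q / 2)⁻¹ ^ 2 * (max a b / (min a b * d) ^ q) := by
        rw [Real.rpow_neg hd.le, Real.mul_rpow hm.le hd.le]; ring
    _ ≤ (1 - q / 2)⁻¹ ^ 2 * (2 * C ^ 2) ^ q *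
          (Metric.diam (quadK a b ta tb) / lenl b ta tb ^ q) := by
        rw [mul_assoc]
        gcongr
        rw [div_le_iff₀ (by positivity)]
        calc max a b = max a b * lenl b ta tb ^ q / lenl b ta tb ^ q :=
              (mul_div_cancel_right₀ _ hLpos.ne').symm
          _ ≤ Metric.diam (quadK a b ta tb) * ((2 * C ^ 2) ^ q * (min a b * d) ^ q) /
                lenl b ta tb ^ q := by gcongr
          _ = _ := by ring
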